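/- Set r = (1−ε) + ε · max_{u∈V} ∑_{y∈V} tanh(β |J_{u,y}| / 2) and suppose r < 1. Then for all spin configurations σ, τ ∈ {-1,+1}^V and every t ∈ ℕ, the t-step distributions of the ε-SCA satisfy ‖P^t_{β,ε}(σ,·) − P^t_{β,ε}(τ,·)‖_TV ≤ r^t · |V|, where P^t denotes the t-fold product of the transition kernel and ‖μ−ν‖_TV = (1/2) ∑_{η ∈ {-1,+1}^V} |μ(η) − ν(η)| is the total variation distance. -/

import Mathlib

open Real Finset

variable {V : Type*}

/-- The real value of a Boolean spin: `true ↦ +1`, `false ↦ -1`. -/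
def sp (b : Bool) : ℝ := if b then 1 else -1

/-- The cavity field `h̃_x(σ) = ∑_y J_{x,y} σ_y + h_x`. -/
noncomputable def cavity [Fintype V] (J : V → V → ℝ) (h : V → ℝ) (σ : V → Bool) (x : V) : ℝ :=
  (∑ y, J x y * sp (σ y)) + h x

/-- The ε-SCA flip probability `p_x(σ) = e^{-(β/2) h̃_x(σ) σ_x} / (2 cosh((β/2) h̃_x(σ)))`. -/
noncomputable def flipProb [Fintype V] (J : V → V → ℝ) (h : V → ℝ) (β : ℝ)
    (σ : V → Bool) (x : V) : ℝ :=
  Real.exp (-(β / 2) * cavity J h σ x * sp (σ x)) / (2 * Real.cosh ((β / 2) * cavity J h σ x))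

/-- The ε-SCA transition kernel
`P_{β,ε}(σ,τ) = ∏_{x : τ_x = -σ_x} ε p_x(σ) · ∏_{y : τ_y = σ_y} (1 - ε p_y(σ))`. -/
noncomputable def Peps [Fintype V] [DecidableEq V] (J : V → V → ℝ) (h : V → ℝ) (β ε : ℝ)
    (σ τ : V → Bool) : ℝ :=
  (∏ x ∈ univ.filter (fun x => τ x ≠ σ x), ε * flipProb J h β σ x) *
    ∏ y ∈ univ.filter (fun y => τ y = σ y), (1 - ε * flipProb J h β σ y)

/-- The t-fold product (t-step transition probabilities) of a kernel P on configurations. -/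
noncomputable def kpow [Fintype V] [DecidableEq V]
    (P : (V → Bool) → (V → Bool) → ℝ) : ℕ → (V → Bool) → (V → Bool) → ℝ
  | 0 => fun σ τ => if σ = τ then 1 else 0
  | n + 1 => fun σ τ => ∑ η, P σ η * kpow P n η τ

/-- Total variation distance `‖μ−ν‖_TV = (1/2) ∑_η |μ(η) − ν(η)|`. -/
noncomputable def tvDist [Fintype V] [DecidableEq V] (μ ν : (V → Bool) → ℝ) : ℝ :=
  (1 / 2) * ∑ η, |μ η - ν η|

/-!
The proof is Dobrushin's one-step contraction argument. Call `f` site-Lipschitz with constant `c`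
if changing a single spin changes `f` by at most `c`. Given `σ`, the ε-SCA updates all spins
independently, so `P(σ, ·)` is a product of Bernoulli laws with parameters `upProb σ y`, and for
product laws, changing the parameters from `q` to `q'` moves the mean of a site-Lipschitz `f` by
at most `c ∑_y |q'_y - q_y|`. Flipping the spin at `x` changes the parameter at `x` by at most
`1 - ε` (the lazy part) and the one at `y` by at most `ε tanh(β |J_{y,x}| / 2)` (through the cavity
field), so `P f` is site-Lipschitz with constant `r c`, and `P^t f` with constant `r^t c`. The
total variation distance is `P^t f (σ) - P^t f (τ)` for the indicator `f` of
`{P^t(τ, ·) ≤ P^t(σ, ·)}`, and walking from `σ` to `τ` one spin at a time bounds it by `r^t |V|`.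
-/

open Function

namespace Real

lemma tanh_le_tanh {a b : ℝ} (hab : a ≤ b) : tanh a ≤ tanh b := by
  have mem (x : ℝ) : tanh x ∈ Set.Ioo (-1) 1 := abs_lt.1 (abs_tanh_lt_one x)
  rwa [← artanh_le_artanh_iff (mem a) (mem b), artanh_tanh, artanh_tanh]

lemma tanh_add_sub_tanh_sub_le (m : ℝ) {d : ℝ} (hd : 0 ≤ d) :
    tanh (m + d) - tanh (m - d) ≤ 2 * tanh d := by
  have hm := cosh_sq_sub_sinh_sq m
  have hd' := cosh_sq_sub_sinh_sq d
  have hsd : 0 ≤ sinh d := sinh_nonneg_iff.2 hd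
  rw [tanh_eq_sinh_div_cosh, tanh_eq_sinh_div_cosh, tanh_eq_sinh_div_cosh,
    div_sub_div _ _ (cosh_pos _).ne' (cosh_pos _).ne', mul_div_assoc',
    div_le_div_iff₀ (mul_pos (cosh_pos _) (cosh_pos _)) (cosh_pos d)]
  simp only [sinh_add, sinh_sub, cosh_add, cosh_sub]
  nlinarith [mul_nonneg hsd (sq_nonneg (sinh m)), mul_nonneg hsd (cosh_pos d).le]

lemma abs_tanh_sub_tanh_le (a b : ℝ) : |tanh a - tanh b| ≤ 2 * tanh (|a - b| / 2) := by
  wlog hba : b ≤ a generalizing a b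
  · rw [abs_sub_comm, abs_sub_comm a]
    exact this b a (le_of_not_ge hba)
  have key := tanh_add_sub_tanh_sub_le ((a + b) / 2) (d := (a - b) / 2) (by linarith)
  rw [abs_of_nonneg (sub_nonneg.2 (tanh_le_tanh hba)), abs_of_nonneg (sub_nonneg.2 hba)]
  convert key using 3 <;> ring

end Real

section SiteLipschitz

variable [DecidableEq V] {α : Type*}

def SiteLipschitzWith (c : ℝ) (f : (V → α) → ℝ) : Prop :=
  ∀ σ x a, |f (update σ x a) - f σ| ≤ c

lemma SiteLipschitzWith.abs_update_sub_update_le {c : ℝ} {f : (V → α) → ℝ}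
    (hf : SiteLipschitzWith c f) (σ : V → α) (x : V) (a b : α) :
    |f (update σ x a) - f (update σ x b)| ≤ c := by
  simpa using hf (update σ x b) x a

lemma SiteLipschitzWith.abs_sub_le_mul_card [Fintype V] {c : ℝ} {f : (V → α) → ℝ}
    (hf : SiteLipschitzWith c f) (σ τ : V → α) : |f σ - f τ| ≤ c * Fintype.card V := by
  suffices ∀ S : Finset V, |f (S.piecewise τ σ) - f σ| ≤ c * #S by
    rw [abs_sub_comm]; simpa using this univ
  intro S
  induction S using Finset.induction_on with
  | empty => simp
  | insert x S hx ih =>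
    rw [piecewise_insert, card_insert_of_notMem hx, Nat.cast_succ, mul_add_one, add_comm]
    exact (abs_sub_le _ _ _).trans (add_le_add (hf _ _ _) ih)

end SiteLipschitz

section Bernoulli

variable [Fintype V] [DecidableEq V]

def bernoulliWeight (q : V → ℝ) (τ : V → Bool) : ℝ :=
  ∏ y, if τ y then q y else 1 - q y

lemma sum_bernoulliWeight (q : V → ℝ) : ∑ τ, bernoulliWeight q τ = 1 := by
  simp [bernoulliWeight, ← Fintype.prod_sum (fun y (b : Bool) => if b then q y else 1 - q y)]

lemma bernoulliWeight_update (q : V → ℝ) (x : V) (p : ℝ) (τ : V → Bool) :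
    bernoulliWeight (update q x p) τ =
      (if τ x then p else 1 - p) * ∏ y ∈ univ.erase x, if τ y then q y else 1 - q y := by
  rw [bernoulliWeight, ← mul_prod_erase _ _ (mem_univ x), update_self]
  congr 1
  exact prod_congr rfl fun y hy => by rw [update_of_ne (ne_of_mem_erase hy)]

lemma two_mul_sum_eq_sum_update (F : (V → Bool) → ℝ) (x : V) :
    2 * ∑ τ, F τ = ∑ τ, (F (update τ x true) + F (update τ x false)) := by
  let e := Involutive.toPerm (fun τ : V → Bool => update τ x (!τ x)) fun τ => by simp
  calc 2 * ∑ τ, F τ = ∑ τ, (F τ + F (e τ)) := by rw [sum_add_distrib, Equiv.sum_comp e F]; ring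
    _ = _ := sum_congr rfl fun τ _ => by
      change F τ + F (update τ x (!τ x)) = _
      cases hτ : τ x
      · rw [add_comm, ← hτ, update_eq_self, hτ]; rfl
      · rw [← hτ, update_eq_self, hτ]; rfl

namespace SiteLipschitzWith

variable {c : ℝ} {f : (V → Bool) → ℝ}

lemma abs_sum_bernoulliWeight_update_sub_le (hf : SiteLipschitzWith c f) {q : V → ℝ}
    (hq : ∀ y, q y ∈ Set.Icc 0 1) (x : V) (p : ℝ) :
    |∑ τ, bernoulliWeight (update q x p) τ * f τ - ∑ τ, bernoulliWeight q τ * f τ|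
      ≤ |p - q x| * c := by
  set d := p - q x
  set W : (V → Bool) → ℝ := fun τ => ∏ y ∈ univ.erase x, if τ y then q y else 1 - q y
  have hW_update (τ : V → Bool) (b : Bool) : W (update τ x b) = W τ :=
    prod_congr rfl fun y hy => by rw [update_of_ne (ne_of_mem_erase hy)]
  have hW_nonneg (τ : V → Bool) : 0 ≤ W τ :=
    prod_nonneg fun y _ => by split_ifs <;> linarith [hq y |>.1, hq y |>.2]
  have hq_eq (τ : V → Bool) : bernoulliWeight q τ = (if τ x then q x else 1 - q x) * W τ := by
    simpa using bernoulliWeight_update q x (q x) τ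
  have hW_sum : ∑ τ, W τ = 2 := by
    calc ∑ τ, W τ = 2 * ∑ τ, bernoulliWeight (update q x (1 / 2)) τ := by
          rw [mul_sum]
          exact sum_congr rfl fun τ _ => by rw [bernoulliWeight_update]; split_ifs <;> ring
      _ = 2 := by rw [sum_bernoulliWeight, mul_one]
  have hdiff : ∑ τ, bernoulliWeight (update q x p) τ * f τ - ∑ τ, bernoulliWeight q τ * f τ
      = ∑ τ, (if τ x then d else -d) * W τ * f τ := by
    rw [← sum_sub_distrib]
    exact sum_congr rfl fun τ _ => by
      rw [bernoulliWeight_update, hq_eq]; split_ifs <;> ring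
  have hpair : 2 * ∑ τ, (if τ x then d else -d) * W τ * f τ
      = ∑ τ, d * W τ * (f (update τ x true) - f (update τ x false)) := by
    rw [two_mul_sum_eq_sum_update _ x]
    exact sum_congr rfl fun τ _ => by
      simp only [update_self, hW_update, if_true, Bool.false_eq_true, if_false]; ring
  have hbound : |∑ τ, d * W τ * (f (update τ x true) - f (update τ x false))| ≤ |d| * c * 2 := by
    calc _ ≤ ∑ τ, |d| * W τ * c := by
          refine (abs_sum_le_sum_abs _ _).trans (sum_le_sum fun τ _ => ?_)
          rw [abs_mul, abs_mul, abs_of_nonneg (hW_nonneg τ)]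
          exact mul_le_mul_of_nonneg_left (hf.abs_update_sub_update_le τ x true false)
            (mul_nonneg (abs_nonneg d) (hW_nonneg τ))
      _ = |d| * c * 2 := by rw [← hW_sum, mul_sum]; exact sum_congr rfl fun τ _ => by ring
  rw [hdiff]
  rw [← hpair, abs_mul, abs_two] at hbound
  linarith

lemma abs_sum_bernoulliWeight_sub_le (hf : SiteLipschitzWith c f) {q q' : V → ℝ}
    (hq : ∀ y, q y ∈ Set.Icc 0 1) (hq' : ∀ y, q' y ∈ Set.Icc 0 1) :
    |∑ τ, bernoulliWeight q' τ * f τ - ∑ τ, bernoulliWeight q τ * f τ|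
      ≤ (∑ y, |q' y - q y|) * c := by
  suffices ∀ S : Finset V, |∑ τ, bernoulliWeight (S.piecewise q' q) τ * f τ
      - ∑ τ, bernoulliWeight q τ * f τ| ≤ (∑ y ∈ S, |q' y - q y|) * c by
    simpa using this univ
  intro S
  induction S using Finset.induction_on with
  | empty => simp
  | insert x S hx ih =>
    have hS (y : V) : S.piecewise q' q y ∈ Set.Icc 0 1 := by
      by_cases hy : y ∈ S <;> simp [hy, hq y, hq' y]
    have hstep := hf.abs_sum_bernoulliWeight_update_sub_le hS x (q' x)
    rw [piecewise_eq_of_notMem _ _ _ hx] at hstep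
    rw [piecewise_insert, sum_insert hx, add_mul]
    exact (abs_sub_le _ _ _).trans (add_le_add hstep ih)

end SiteLipschitzWith

end Bernoulli

section SCA

variable [Fintype V] (J : V → V → ℝ) (h : V → ℝ) (β ε : ℝ)

lemma flipProb_eq (σ : V → Bool) (x : V) :
    flipProb J h β σ x = (1 - sp (σ x) * tanh (β / 2 * cavity J h σ x)) / 2 := by
  have hcosh := (cosh_pos (β / 2 * cavity J h σ x)).ne'
  rw [flipProb, tanh_eq_sinh_div_cosh]
  cases σ x
  · rw [sp, if_neg Bool.false_ne_true, show -(β / 2) * cavity J h σ x * -1 = β / 2 * cavity J h σ x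
      by ring, ← cosh_add_sinh]
    field_simp
    ring
  · rw [sp, if_pos rfl, show -(β / 2) * cavity J h σ x * 1 = -(β / 2 * cavity J h σ x) by ring,
      ← cosh_sub_sinh]
    field_simp

/-- The probability that the spin at `y` is `+1` after one step from `σ`: it is kept with
probability `1 - ε` and otherwise resampled from the heat-bath law in the cavity field. -/
noncomputable def upProb (σ : V → Bool) (y : V) : ℝ :=
  (1 + (1 - ε) * sp (σ y) + ε * tanh (β / 2 * cavity J h σ y)) / 2

variable {ε}

lemma abs_sp_le_one (b : Bool) : |sp b| ≤ 1 := by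
  cases b <;> simp [sp]

lemma abs_sp_sub_sp_le (a b : Bool) : |sp a - sp b| ≤ 2 := by
  linarith [abs_sub (sp a) (sp b), abs_sp_le_one a, abs_sp_le_one b]

lemma upProb_mem_Icc (hε : ε ∈ Set.Icc (0 : ℝ) 1) (σ : V → Bool) (y : V) :
    upProb J h β ε σ y ∈ Set.Icc 0 1 := by
  obtain ⟨hs₁, hs₂⟩ := abs_le.1 (abs_sp_le_one (σ y))
  obtain ⟨ht₁, ht₂⟩ := abs_le.1 (abs_tanh_lt_one (β / 2 * cavity J h σ y)).le
  obtain ⟨hε₀, hε₁⟩ := hε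
  rw [upProb]
  constructor <;> nlinarith [mul_nonneg hε₀ (sub_nonneg.2 hε₁)]

variable {J h}

lemma cavity_sub_cavity_of_eq_off {σ σ' : V → Bool} {x : V} (hσ : ∀ z ≠ x, σ' z = σ z) (y : V) :
    cavity J h σ' y - cavity J h σ y = J y x * (sp (σ' x) - sp (σ x)) := by
  rw [cavity, cavity, add_sub_add_right_eq_sub, ← sum_sub_distrib]
  simp_rw [← mul_sub]
  exact sum_eq_single x (fun z _ hz => by rw [hσ z hz, sub_self, mul_zero]) (by simp)

end SCA

section SCAKernel

variable [Fintype V] [DecidableEq V] (J : V → V → ℝ) (h : V → ℝ) (β ε : ℝ)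

lemma Peps_eq_bernoulliWeight (σ τ : V → Bool) :
    Peps J h β ε σ τ = bernoulliWeight (upProb J h β ε σ) τ := by
  have factor (y : V) : (if τ y then upProb J h β ε σ y else 1 - upProb J h β ε σ y)
      = if τ y ≠ σ y then ε * flipProb J h β σ y else 1 - ε * flipProb J h β σ y := by
    rw [upProb, flipProb_eq]
    cases σ y <;> cases τ y <;> simp [sp] <;> ring
  simp only [bernoulliWeight, factor, prod_ite, not_not, Peps]

variable {J h β ε}

lemma abs_upProb_sub_upProb_le (hβ : 0 ≤ β) (hε : ε ∈ Set.Icc (0 : ℝ) 1)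
    {σ σ' : V → Bool} {x : V} (hσ : ∀ z ≠ x, σ' z = σ z) (y : V) :
    |upProb J h β ε σ' y - upProb J h β ε σ y|
      ≤ (if y = x then 1 - ε else 0) + ε * tanh (β * |J y x| / 2) := by
  obtain ⟨hε₀, hε₁⟩ := hε
  have hspin : |sp (σ' y) - sp (σ y)| ≤ if y = x then 2 else 0 := by
    split_ifs with hy
    · exact abs_sp_sub_sp_le _ _
    · rw [hσ y hy, sub_self, abs_zero]
  have hfield : |β / 2 * cavity J h σ' y - β / 2 * cavity J h σ y| ≤ β * |J y x| := by
    rw [← mul_sub, cavity_sub_cavity_of_eq_off hσ, abs_mul, abs_mul, abs_of_nonneg (by positivity)]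
    nlinarith [mul_le_mul_of_nonneg_left (abs_sp_sub_sp_le (σ' x) (σ x))
      (mul_nonneg hβ (abs_nonneg (J y x)))]
  have htanh : |tanh (β / 2 * cavity J h σ' y) - tanh (β / 2 * cavity J h σ y)|
      ≤ 2 * tanh (β * |J y x| / 2) :=
    (abs_tanh_sub_tanh_le _ _).trans
      (mul_le_mul_of_nonneg_left (tanh_le_tanh (by linarith)) zero_le_two)
  have hdiff : upProb J h β ε σ' y - upProb J h β ε σ y
      = ((1 - ε) * (sp (σ' y) - sp (σ y))
        + ε * (tanh (β / 2 * cavity J h σ' y) - tanh (β / 2 * cavity J h σ y))) / 2 := by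
    simp only [upProb]; ring
  have hsplit := abs_add_le ((1 - ε) * (sp (σ' y) - sp (σ y)))
    (ε * (tanh (β / 2 * cavity J h σ' y) - tanh (β / 2 * cavity J h σ y)))
  rw [abs_mul, abs_mul, abs_of_nonneg (sub_nonneg.2 hε₁), abs_of_nonneg hε₀] at hsplit
  have hspin' := mul_le_mul_of_nonneg_left hspin (sub_nonneg.2 hε₁)
  have htanh' := mul_le_mul_of_nonneg_left htanh hε₀
  rw [hdiff, abs_div, abs_two]
  split_ifs at hspin' ⊢ <;> linarith

lemma sum_abs_upProb_sub_upProb_le (hβ : 0 ≤ β) (hε : ε ∈ Set.Icc (0 : ℝ) 1)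
    {σ σ' : V → Bool} {x : V} (hσ : ∀ z ≠ x, σ' z = σ z) :
    ∑ y, |upProb J h β ε σ' y - upProb J h β ε σ y|
      ≤ (1 - ε) + ε * ∑ y, tanh (β * |J y x| / 2) := by
  refine (sum_le_sum fun y _ => abs_upProb_sub_upProb_le hβ hε hσ y).trans_eq ?_
  rw [sum_add_distrib, sum_ite_eq', if_pos (mem_univ x), mul_sum]

end SCAKernel

section Iterates

variable [Fintype V] [DecidableEq V] (P : (V → Bool) → (V → Bool) → ℝ)

lemma sum_kpow_succ_mul (n : ℕ) (σ : V → Bool) (f : (V → Bool) → ℝ) :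
    ∑ τ, kpow P (n + 1) σ τ * f τ = ∑ η, P σ η * ∑ τ, kpow P n η τ * f τ := by
  simp only [kpow, sum_mul, mul_sum, mul_assoc]
  exact sum_comm

lemma sum_kpow_eq_one (hP : ∀ σ, ∑ τ, P σ τ = 1) (t : ℕ) (σ : V → Bool) :
    ∑ τ, kpow P t σ τ = 1 := by
  induction t generalizing σ with
  | zero => simp [kpow]
  | succ n ih => simpa [ih, hP] using sum_kpow_succ_mul P n σ 1

variable {P}

lemma SiteLipschitzWith.sum_kpow_mul {r : ℝ}
    (hP : ∀ c f, SiteLipschitzWith c f → SiteLipschitzWith (r * c) fun σ => ∑ τ, P σ τ * f τ)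
    {c : ℝ} {f : (V → Bool) → ℝ} (hf : SiteLipschitzWith c f) (t : ℕ) :
    SiteLipschitzWith (r ^ t * c) fun σ => ∑ τ, kpow P t σ τ * f τ := by
  induction t with
  | zero => simpa [kpow] using hf
  | succ n ih =>
    rw [pow_succ', mul_assoc]
    simpa only [sum_kpow_succ_mul] using hP _ _ ih

end Iterates

lemma SiteLipschitzWith.sum_Peps_mul [Fintype V] [DecidableEq V] {J : V → V → ℝ} {h : V → ℝ}
    {β ε r c : ℝ} {f : (V → Bool) → ℝ} (hβ : 0 ≤ β) (hε : ε ∈ Set.Icc (0 : ℝ) 1)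
    (hr : ∀ x, (1 - ε) + ε * ∑ y, tanh (β * |J y x| / 2) ≤ r) (hf : SiteLipschitzWith c f) :
    SiteLipschitzWith (r * c) fun σ => ∑ τ, Peps J h β ε σ τ * f τ := by
  intro σ x b
  have hc : 0 ≤ c := by simpa using hf σ x (σ x)
  have hσ : ∀ z ≠ x, update σ x b z = σ z := fun z hz => update_of_ne hz _ _
  simp only [Peps_eq_bernoulliWeight]
  exact (hf.abs_sum_bernoulliWeight_sub_le (upProb_mem_Icc J h β hε σ)
    (upProb_mem_Icc J h β hε _)).trans
    (mul_le_mul_of_nonneg_right ((sum_abs_upProb_sub_upProb_le hβ hε hσ).trans (hr x)) hc)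

lemma tvDist_eq_sub_of_sum_eq [Fintype V] [DecidableEq V] (μ ν : (V → Bool) → ℝ)
    (hμν : ∑ η, μ η = ∑ η, ν η) :
    tvDist μ ν = ∑ η, μ η * (if ν η ≤ μ η then 1 else 0)
      - ∑ η, ν η * (if ν η ≤ μ η then 1 else 0) := by
  have habs (η : V → Bool) : |μ η - ν η|
      = 2 * (μ η * (if ν η ≤ μ η then 1 else 0) - ν η * (if ν η ≤ μ η then 1 else 0))
        - (μ η - ν η) := by
    split_ifs with hle
    · rw [abs_of_nonneg (sub_nonneg.2 hle)]; ring
    · rw [abs_of_neg (sub_neg.2 (not_le.1 hle))]; ring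
  rw [tvDist, sum_congr rfl fun η _ => habs η, sum_sub_distrib, ← mul_sum, sum_sub_distrib,
    sum_sub_distrib, hμν]
  ring

theorem epsSCA_tv_contraction_general [Fintype V] [DecidableEq V] [Nonempty V]
    (J : V → V → ℝ) (h : V → ℝ)
    (hsym : ∀ x y, J x y = J y x)
    (β : ℝ) (hβ : 0 ≤ β) (ε : ℝ) (hε : ε ∈ Set.Ioc (0 : ℝ) 1)
    (r : ℝ)
    (hr : r = (1 - ε) + ε * univ.sup' univ_nonempty (fun u => ∑ y, Real.tanh (β * |J u y| / 2)))
    (σ τ : V → Bool) (t : ℕ) :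
    tvDist (kpow (Peps J h β ε) t σ) (kpow (Peps J h β ε) t τ) ≤ r ^ t * (Fintype.card V : ℝ) := by
  have hε' : ε ∈ Set.Icc (0 : ℝ) 1 := Set.Ioc_subset_Icc_self hε
  have hcol (x : V) : (1 - ε) + ε * ∑ y, tanh (β * |J y x| / 2) ≤ r := by
    rw [hr, sum_congr rfl fun y _ => by rw [hsym y x]]
    gcongr
    · exact hε'.1
    · exact le_sup' (fun u => ∑ y, tanh (β * |J u y| / 2)) (mem_univ x)
  have hstoch (σ : V → Bool) : ∑ τ, Peps J h β ε σ τ = 1 := by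
    simp only [Peps_eq_bernoulliWeight, sum_bernoulliWeight]
  set μ := kpow (Peps J h β ε) t σ
  set ν := kpow (Peps J h β ε) t τ
  set f : (V → Bool) → ℝ := fun η => if ν η ≤ μ η then 1 else 0
  have hf : SiteLipschitzWith 1 f := fun _ _ _ => by
    simp only [f]; split_ifs <;> norm_num
  have hg := hf.sum_kpow_mul (fun _ _ hf => hf.sum_Peps_mul (h := h) hβ hε' hcol) t
  rw [tvDist_eq_sub_of_sum_eq μ ν (by rw [sum_kpow_eq_one _ hstoch, sum_kpow_eq_one _ hstoch])]
  calc _ ≤ _ := le_abs_self _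
    _ ≤ r ^ t * 1 * Fintype.card V := hg.abs_sub_le_mul_card σ τ
    _ = r ^ t * Fintype.card V := by rw [mul_one]

/-- with `r = (1−ε) + ε·max_u ∑_y tanh(β|J_{u,y}|/2) < 1`, for all σ, τ and
every t ∈ ℕ, `‖P^t_{β,ε}(σ,·) − P^t_{β,ε}(τ,·)‖_TV ≤ r^t · |V|`. -/
theorem epsSCA_tv_contraction [Fintype V] [DecidableEq V] [Nonempty V]
    (G : SimpleGraph V) (J : V → V → ℝ) (h : V → ℝ)
    (hsym : ∀ x y, J x y = J y x)
    (hJG : ∀ x y, ¬ G.Adj x y → J x y = 0)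
    (β : ℝ) (hβ : 0 ≤ β) (ε : ℝ) (hε : ε ∈ Set.Ioc (0 : ℝ) 1)
    (r : ℝ)
    (hr : r = (1 - ε) + ε * univ.sup' univ_nonempty (fun u => ∑ y, Real.tanh (β * |J u y| / 2)))
    (hr1 : r < 1)
    (σ τ : V → Bool) (t : ℕ) :
    tvDist (kpow (Peps J h β ε) t σ) (kpow (Peps J h β ε) t τ) ≤ r ^ t * (Fintype.card V : ℝ) :=
  epsSCA_tv_contraction_general J h hsym β hβ ε hε r hr σ τ t
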